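/- arXiv:1305.1849 — 3 statements merged into one kernel-verified Lean document; each statement's English description precedes it below -/
import Mathlib

section
/- For all b, c ∈ ℂ and every real z > 0, the generalized Bessel function with p = −b/2 reduces to the cosine: 𝒲_{−b/2, b, c²}(z) = (z/2)^{−b/2} · cos(cz)/√π. -/
open MeasureTheory

/-- Pochhammer symbol `(a)_k = a (a+1) ⋯ (a+k-1)`. -/
noncomputable def poch (a : ℂ) (k : ℕ) : ℂ := ∏ i ∈ Finset.range k, (a + i)

/-- The third Appell function `F₃`. -/
noncomputable def appellF3 (a a' b b' g x y : ℂ) : ℂ :=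
  ∑' m : ℕ, ∑' n : ℕ,
    (poch a m * poch a' n * poch b m * poch b' n) /
      (poch g (m + n) * (Nat.factorial m : ℂ) * (Nat.factorial n : ℂ)) * x ^ m * y ^ n

/-- Left-sided Marichev–Saigo–Maeda fractional integral. -/
noncomputable def msmLeft (a a' b b' g : ℂ) (f : ℝ → ℂ) (x : ℝ) : ℂ :=
  ((x : ℂ) ^ (-a) / Complex.Gamma g) *
    ∫ t in Set.Ioo (0 : ℝ) x,
      ((x - t : ℝ) : ℂ) ^ (g - 1) * (t : ℂ) ^ (-a') *
        appellF3 a a' b b' g (1 - (t : ℂ) / (x : ℂ)) (1 - (x : ℂ) / (t : ℂ)) * f t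

/-- Right-sided Marichev–Saigo–Maeda fractional integral. -/
noncomputable def msmRight (a a' b b' g : ℂ) (f : ℝ → ℂ) (x : ℝ) : ℂ :=
  ((x : ℂ) ^ (-a') / Complex.Gamma g) *
    ∫ t in Set.Ioi x,
      ((t - x : ℝ) : ℂ) ^ (g - 1) * (t : ℂ) ^ (-a) *
        appellF3 a a' b b' g (1 - (x : ℂ) / (t : ℂ)) (1 - (t : ℂ) / (x : ℂ)) * f t

/-- Generalized Bessel function of the first kind `𝒲_{p,b,c}`. -/
noncomputable def genBessel (p b c : ℂ) (z : ℂ) : ℂ :=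
  ∑' k : ℕ, ((-1) ^ k * c ^ k) /
    (Complex.Gamma (p + (b + 1) / 2 + k) * (Nat.factorial k : ℂ)) *
      (z / 2) ^ (2 * (k : ℂ) + p)

/-- Generalized Wright function `ₚψ_q`. -/
noncomputable def wright (a b : List (ℂ × ℂ)) (z : ℂ) : ℂ :=
  ∑' k : ℕ,
    ((a.map fun q => Complex.Gamma (q.1 + q.2 * k)).prod /
      (b.map fun q => Complex.Gamma (q.1 + q.2 * k)).prod) * z ^ k / (Nat.factorial k : ℂ)

/-- Generalized hypergeometric function `ₚF_q`. -/
noncomputable def genHyper (a c : List ℂ) (z : ℂ) : ℂ :=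
  ∑' k : ℕ, ((a.map fun q => poch q k).prod / (c.map fun q => poch q k).prod) *
    z ^ k / (Nat.factorial k : ℂ)

/-!
For `p = -b/2` the Gamma factor of the `k`-th term is `Γ(1/2 + k)`, and Legendre's duplication
formula gives `Γ(1/2 + k) k! = √π (2k)! / 4^k`. The `k`-th term therefore collapses to
`(-1)^k (c z)^(2k) / (2k)!` times `(z/2)^(-b/2) / √π`, and the remaining series is that of `cos (c z)`.
-/

open Nat in
theorem Complex.Gamma_one_half_add_nat_mul_factorial (k : ℕ) :
    Complex.Gamma (1 / 2 + k) * k ! = √Real.pi * (2 * k)! / 4 ^ k := by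
  have h := Complex.Gamma_mul_Gamma_add_half (1 / 2 + k)
  rw [show (1 / 2 + k : ℂ) + 1 / 2 = k + 1 by ring, Complex.Gamma_nat_eq_factorial,
    show 2 * (1 / 2 + k : ℂ) = (2 * k : ℕ) + 1 by push_cast; ring, Complex.Gamma_nat_eq_factorial,
    show 1 - ((2 * k : ℕ) + 1 : ℂ) = -(2 * k : ℕ) by ring, Complex.cpow_neg,
    Complex.cpow_natCast, pow_mul] at h
  linear_combination h

open Nat in
theorem genBessel_neg_half_term_eq (b c w : ℂ) (hw : w ≠ 0) (k : ℕ) :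
    (-1) ^ k * (c ^ 2) ^ k / (Complex.Gamma (-b / 2 + (b + 1) / 2 + k) * k !) *
        (w / 2) ^ (2 * (k : ℂ) + -b / 2) =
      (-1) ^ k * (c * w) ^ (2 * k) / (2 * k)! * ((w / 2) ^ (-b / 2) / √Real.pi) := by
  have hw2 : w / 2 ≠ 0 := div_ne_zero hw two_ne_zero
  rw [show -b / 2 + (b + 1) / 2 + k = 1 / 2 + k by ring,
    Complex.Gamma_one_half_add_nat_mul_factorial, Complex.cpow_add _ _ hw2,
    show 2 * (k : ℂ) = (2 * k : ℕ) by push_cast; ring, Complex.cpow_natCast]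
  have hπ : (√Real.pi : ℂ) ≠ 0 := by exact_mod_cast (Real.sqrt_pos.2 Real.pi_pos).ne'
  have hf : ((2 * k)! : ℂ) ≠ 0 := by exact_mod_cast (2 * k).factorial_ne_zero
  field_simp
  rw [pow_mul, pow_mul, ← mul_pow, ← mul_pow]
  ring

theorem genBessel_neg_half_eq_cos (b c w : ℂ) (hw : w ≠ 0) :
    genBessel (-b / 2) b (c ^ 2) w = (w / 2) ^ (-b / 2) * Complex.cos (c * w) / √Real.pi := by
  simp only [genBessel, genBessel_neg_half_term_eq b c w hw]
  rw [tsum_mul_right, (Complex.hasSum_cos _).tsum_eq]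
  ring

theorem stmt6 (b c : ℂ) (z : ℝ) (hz : 0 < z) :
    genBessel (-b / 2) b (c ^ 2) (z : ℂ) =
      ((z : ℂ) / 2) ^ (-b / 2) * Complex.cos (c * z) / (Real.sqrt Real.pi : ℂ) :=
  genBessel_neg_half_eq_cos b c z (Complex.ofReal_ne_zero.2 hz.ne')
end

section
/- For all b ∈ ℂ, all c ∈ ℂ with c ≠ 0, and every real z > 0, the generalized Bessel function with p = 1 − b/2 reduces to the sine: 𝒲_{1−b/2, b, c²}(z) = (z/2)^{−b/2} · sin(cz)/(c√π). -/
open MeasureTheory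

/-! With `p = 1 - b/2` the Gamma factor of the `k`-th term is `Γ(k + 3/2)`, which Legendre's
duplication formula evaluates as `(2k+1)! √π / (2^(2k+1) k!)`. The `k!` cancels, and after pulling
out `(z/2)^(-b/2) / (c √π)` the series becomes the Taylor series `∑ (-1)^k (cz)^(2k+1) / (2k+1)!`
of `sin (cz)`. -/

open scoped Nat Real

namespace Complex

theorem Gamma_natCast_add_three_halves (k : ℕ) :
    Gamma (k + 3 / 2) = (2 * k + 1)! * √π / (2 ^ (2 * k + 1) * k !) := by
  have hpow : (2 : ℂ) ^ (1 - 2 * ((k : ℂ) + 1)) = ((2 : ℂ) ^ (2 * k + 1))⁻¹ := by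
    rw [← cpow_natCast, ← cpow_neg]
    push_cast
    ring_nf
  have hdup := Gamma_mul_Gamma_add_half (k + 1)
  rw [hpow, show (k : ℂ) + 1 + 1 / 2 = k + 3 / 2 by ring, Gamma_nat_eq_factorial,
    show 2 * ((k : ℂ) + 1) = (2 * k + 1 : ℕ) + 1 by push_cast; ring, Gamma_nat_eq_factorial] at hdup
  have hfac : (k ! : ℂ) ≠ 0 := Nat.cast_ne_zero.mpr k.factorial_ne_zero
  field_simp at hdup ⊢
  linear_combination hdup

end Complex

open Complex Nat in
theorem genBessel_one_sub_half_eq_sin (b c z : ℂ) (hc : c ≠ 0) (hz : z ≠ 0) :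
    genBessel (1 - b / 2) b (c ^ 2) z = (z / 2) ^ (-b / 2) * sin (c * z) / (c * √π) := by
  have hterm (k : ℕ) :
      (-1) ^ k * (c ^ 2) ^ k / (Gamma (1 - b / 2 + (b + 1) / 2 + k) * k !) *
          (z / 2) ^ (2 * (k : ℂ) + (1 - b / 2)) =
        (z / 2) ^ (-b / 2) / (c * √π) * ((-1) ^ k * (c * z) ^ (2 * k + 1) / (2 * k + 1)!) := by
    have hpow :
        (z / 2) ^ (2 * (k : ℂ) + (1 - b / 2)) = (z / 2) ^ (2 * k + 1) * (z / 2) ^ (-b / 2) := by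
      rw [← cpow_natCast, ← cpow_add _ _ (div_ne_zero hz two_ne_zero)]
      push_cast
      ring_nf
    rw [show 1 - b / 2 + (b + 1) / 2 + k = k + 3 / 2 by ring, Gamma_natCast_add_three_halves,
      hpow, div_pow]
    have hsqrtpi : (√π : ℂ) ≠ 0 := ofReal_ne_zero.mpr (Real.sqrt_pos.mpr Real.pi_pos).ne'
    have hfac : (k ! : ℂ) ≠ 0 := Nat.cast_ne_zero.mpr k.factorial_ne_zero
    field_simp
    ring
  rw [genBessel, tsum_congr hterm, ((hasSum_sin (c * z)).mul_left _).tsum_eq]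
  ring

theorem stmt8 (b c : ℂ) (hc : c ≠ 0) (z : ℝ) (hz : 0 < z) :
    genBessel (1 - b / 2) b (c ^ 2) (z : ℂ) =
      ((z : ℂ) / 2) ^ (-b / 2) * Complex.sin (c * z) / (c * (Real.sqrt Real.pi : ℂ)) :=
  genBessel_one_sub_half_eq_sin b c z hc (Complex.ofReal_ne_zero.mpr hz.ne')
end

section
/- For all b ∈ ℂ, all c ∈ ℂ with c ≠ 0, and every real z > 0, the generalized Bessel function with p = 1 − b/2 and parameter −c² reduces to the hyperbolic sine: 𝒲_{1−b/2, b, −c²}(z) = (z/2)^{−b/2} · sinh(cz)/(c√π). -/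
/-! With `p = 1 - b/2` the Gamma factors become `Γ(k + 3/2)`, and Legendre's duplication formula
gives `Γ(k + 3/2) k! = (2k+1)! √π / 2^(2k+1)`. After factoring out `(z/2)^(-b/2)` the series is
therefore termwise the Taylor series of `sinh (c z)`, divided by `c √π`. -/

open MeasureTheory

open Complex Nat

lemma Complex.Gamma_nat_add_three_halves_mul_factorial (k : ℕ) :
    Gamma (k + 3 / 2) * k ! = (2 * k + 1)! * √Real.pi / 2 ^ (2 * k + 1) := by
  have h := Gamma_mul_Gamma_add_half ((k : ℂ) + 1)
  rw [show (k : ℂ) + 1 + 1 / 2 = k + 3 / 2 by ring, Gamma_nat_eq_factorial,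
    show 2 * ((k : ℂ) + 1) = ((2 * k + 1 : ℕ) : ℂ) + 1 by push_cast; ring, Gamma_nat_eq_factorial,
    sub_add_cancel_right, cpow_neg, cpow_natCast] at h
  rw [mul_comm, h]
  field_simp

lemma genBessel_one_sub_half_neg_sq_term (b c z : ℂ) (hc : c ≠ 0) (hz : z ≠ 0) (k : ℕ) :
    (-1) ^ k * (-c ^ 2) ^ k / (Gamma (1 - b / 2 + (b + 1) / 2 + k) * k !) *
        (z / 2) ^ (2 * (k : ℂ) + (1 - b / 2)) =
      (z / 2) ^ (-b / 2) / (c * √Real.pi) * ((c * z) ^ (2 * k + 1) / (2 * k + 1)!) := by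
  have hz2 : z / 2 ≠ 0 := div_ne_zero hz two_ne_zero
  rw [show 1 - b / 2 + (b + 1) / 2 + k = k + 3 / 2 by ring,
    Gamma_nat_add_three_halves_mul_factorial,
    show 2 * (k : ℂ) + (1 - b / 2) = ((2 * k + 1 : ℕ) : ℂ) + -b / 2 by push_cast; ring,
    cpow_add _ _ hz2, cpow_natCast, div_pow z, ← mul_pow, neg_one_mul, neg_neg, ← pow_mul]
  field_simp
  ring

theorem genBessel_one_sub_half_neg_sq_eq_sinh (b c z : ℂ) (hc : c ≠ 0) (hz : z ≠ 0) :
    genBessel (1 - b / 2) b (-c ^ 2) z = (z / 2) ^ (-b / 2) * sinh (c * z) / (c * √Real.pi) := by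
  rw [genBessel, tsum_congr (genBessel_one_sub_half_neg_sq_term b c z hc hz), tsum_mul_left,
    (hasSum_sinh (c * z)).tsum_eq]
  ring

theorem stmt9 (b c : ℂ) (hc : c ≠ 0) (z : ℝ) (hz : 0 < z) :
    genBessel (1 - b / 2) b (-c ^ 2) (z : ℂ) =
      ((z : ℂ) / 2) ^ (-b / 2) * Complex.sinh (c * z) / (c * (Real.sqrt Real.pi : ℂ)) :=
  genBessel_one_sub_half_neg_sq_eq_sinh b c z hc (ofReal_ne_zero.mpr hz.ne')
end
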